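/- The function β ↦ g⁻¹(H_b(β))/β is strictly decreasing on (0,1], where g(x) = (x+1)log(x+1) − x log x and H_b is binary entropy. -/

import Mathlib

noncomputable def g (x : ℝ) : ℝ := (x + 1) * Real.log (x + 1) - x * Real.log x

noncomputable def Hb (p : ℝ) : ℝ := -(p * Real.log p) - (1 - p) * Real.log (1 - p)

/-!
Write `x(β) = g⁻¹(Hb β)`. Since `Hb β < g β` on `(0, 1]`, we have `x(β) < β`. For `0 < t < 1`, the
identity `negMulLog (t * y) = y * negMulLog t + t * negMulLog y` together with concavity of
`negMulLog` shows `g (t * x) < Hb (t * β)` whenever `g x = Hb β` and `x < β`. Taking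
`t = β₁ / β₂` and using that `g` is strictly increasing gives `t * x(β₂) < x(β₁)`.
-/

open Real Set

lemma g_eq_negMulLog_sub (x : ℝ) : g x = negMulLog x - negMulLog (x + 1) := by
  simp only [g, negMulLog_eq_neg]
  ring

lemma Hb_eq_binEntropy : Hb = binEntropy := by
  ext p
  rw [binEntropy_eq_negMulLog_add_negMulLog_one_sub, Hb, negMulLog_eq_neg]
  ring

lemma Hb_nonneg {β : ℝ} (h₀ : 0 ≤ β) (h₁ : β ≤ 1) : 0 ≤ Hb β :=
  Hb_eq_binEntropy ▸ binEntropy_nonneg h₀ h₁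

lemma hasDerivAt_g {x : ℝ} (hx : 0 < x) : HasDerivAt g (log (x + 1) - log x) x := by
  rw [funext g_eq_negMulLog_sub]
  refine ((hasDerivAt_negMulLog hx.ne').fun_sub
    ((hasDerivAt_negMulLog (by linarith : x + 1 ≠ 0)).comp_add_const x 1)).congr_deriv ?_
  ring

lemma g_strictMonoOn : StrictMonoOn g (Ici 0) := by
  have hcont : Continuous g := by
    rw [funext g_eq_negMulLog_sub]
    fun_prop
  refine strictMonoOn_of_deriv_pos (convex_Ici 0) hcont.continuousOn fun x hx => ?_
  rw [interior_Ici, mem_Ioi] at hx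
  rw [(hasDerivAt_g hx).deriv, sub_pos]
  exact log_lt_log hx (lt_add_one x)

lemma mul_negMulLog_le_negMulLog {t y : ℝ} (ht₀ : 0 ≤ t) (ht₁ : t ≤ 1) (hy : 0 ≤ y) :
    t * negMulLog y ≤ negMulLog (t * y + (1 - t)) := by
  simpa using concaveOn_negMulLog.2 (mem_Ici.2 hy) (mem_Ici.2 zero_le_one) ht₀ (sub_nonneg.2 ht₁)
    (add_sub_cancel t 1)

/-- `g β - Hb β = -(negMulLog (1 - β) + negMulLog (1 + β))`, negative by strict concavity of
`negMulLog` at the midpoint `1`. -/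
lemma Hb_lt_g {β : ℝ} (hβ₀ : 0 < β) (hβ₁ : β ≤ 1) : Hb β < g β := by
  have h := strictConcaveOn_negMulLog.2 (mem_Ici.2 (by linarith : (0 : ℝ) ≤ 1 - β))
    (mem_Ici.2 (by linarith : (0 : ℝ) ≤ 1 + β)) (by linarith) (by norm_num : (0 : ℝ) < 1 / 2)
    (by norm_num : (0 : ℝ) < 1 / 2) (by norm_num)
  have hmid : (1 / 2 : ℝ) • (1 - β) + (1 / 2 : ℝ) • (1 + β) = 1 := by
    simp only [smul_eq_mul]
    ring
  rw [hmid, negMulLog_one, smul_eq_mul, smul_eq_mul] at h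
  rw [Hb_eq_binEntropy, binEntropy_eq_negMulLog_add_negMulLog_one_sub, g_eq_negMulLog_sub,
    add_comm β 1]
  linarith

/-- `Hb (t * β) - g (t * x)` is `(β - x) * negMulLog t` plus two concavity gaps of `negMulLog`. -/
lemma g_mul_lt_Hb_mul {β x t : ℝ} (hβ : β ≤ 1) (hx : 0 ≤ x) (hxβ : x < β) (ht₀ : 0 < t)
    (ht₁ : t < 1) (hgx : g x = Hb β) : g (t * x) < Hb (t * β) := by
  have hlog : 0 < negMulLog t := by
    have := mul_log_neg ht₀ ht₁
    rw [negMulLog_eq_neg]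
    linarith
  have h₁ := mul_negMulLog_le_negMulLog ht₀.le ht₁.le (sub_nonneg.2 hβ)
  have h₂ := mul_negMulLog_le_negMulLog ht₀.le ht₁.le (by linarith : 0 ≤ x + 1)
  rw [Hb_eq_binEntropy, binEntropy_eq_negMulLog_add_negMulLog_one_sub, g_eq_negMulLog_sub] at hgx ⊢
  rw [negMulLog_mul, negMulLog_mul]
  have e₁ : t * (1 - β) + (1 - t) = 1 - t * β := by ring
  have e₂ : t * (x + 1) + (1 - t) = t * x + 1 := by ring
  rw [e₁] at h₁
  rw [e₂] at h₂
  have hgx_t := congrArg (t * ·) hgx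
  linarith [mul_pos (sub_pos.2 hxβ) hlog]

theorem ginv_binEntropy_div_strictAnti (ginv : ℝ → ℝ)
    (hinv : ∀ x ∈ Set.Ici (0:ℝ), 0 ≤ ginv x ∧ g (ginv x) = x) :
    StrictAntiOn (fun β => ginv (Hb β) / β) (Set.Ioc (0:ℝ) 1) := by
  rintro β₁ ⟨hβ₁, -⟩ β₂ ⟨hβ₂, hβ₂_le⟩ hlt
  obtain ⟨hx₁, hgx₁⟩ := hinv _ (Hb_nonneg hβ₁.le (hlt.le.trans hβ₂_le))
  obtain ⟨hx₂, hgx₂⟩ := hinv _ (Hb_nonneg hβ₂.le hβ₂_le)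
  set x₁ := ginv (Hb β₁)
  set x₂ := ginv (Hb β₂)
  have hx₂_lt : x₂ < β₂ :=
    (g_strictMonoOn.lt_iff_lt hx₂ hβ₂.le).1 (hgx₂ ▸ Hb_lt_g hβ₂ hβ₂_le)
  set t := β₁ / β₂
  have ht₀ : 0 < t := div_pos hβ₁ hβ₂
  have ht₁ : t < 1 := (div_lt_one hβ₂).2 hlt
  have htβ₂ : t * β₂ = β₁ := div_mul_cancel₀ β₁ hβ₂.ne'
  have hlt_x₁ : t * x₂ < x₁ := by
    refine (g_strictMonoOn.lt_iff_lt (mul_nonneg ht₀.le hx₂) hx₁).1 ?_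
    rw [hgx₁, ← htβ₂]
    exact g_mul_lt_Hb_mul hβ₂_le hx₂ hx₂_lt ht₀ ht₁ hgx₂
  calc x₂ / β₂ = t * x₂ / β₁ := by rw [← htβ₂, mul_div_mul_left _ _ ht₀.ne']
    _ < x₁ / β₁ := div_lt_div_of_pos_right hlt_x₁ hβ₁
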